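/- Fix l column indices 1 ≤ υ_1 < … < υ_l ≤ m and l row indices 1 ≤ μ_1 < … < μ_l ≤ m, and set y_n := det [x_{n+μ_i−1}^{(υ_j)}]_{i,j=1,…,l}. Then y_n satisfies the linear recurrence of order C(m,l): ∑_{k=0}^{C(m,l)} (−1)^k det[ det((Ψ_{n+j−1}⋯Ψ_{n+1}Ψ_n))^{(μ,ν)} ]_{j=0,…,k̂,…,C(m,l); 1 ≤ ν_1 < … < ν_l ≤ m} · y_{n+k} = 0, where for each j the inner entry is the l×l minor with rows μ and columns ν of the matrix product Ψ_{n+j−1}⋯Ψ_n (the empty product, for j = 0, being the identity matrix), k̂ means the index k is omitted from the range of j, and the coefficients do not depend on the choice of the columns υ. -/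
import Mathlib

open Matrix

section CauchyBinet

open Finset Equiv

private lemma cb_aux {l m : ℕ} {A : Matrix (Fin l) (Fin m) ℂ} {B : Matrix (Fin m) (Fin l) ℂ}
    {f : Fin l → Fin m} (H : ¬ Function.Injective f) :
    (∑ σ : Equiv.Perm (Fin l), ((Equiv.Perm.sign σ : ℤ) : ℂ) * ∏ i, A (σ i) (f i) * B (f i) i)
      = 0 := by
  obtain ⟨i, j, hfij, hij⟩ : ∃ i j, f i = f j ∧ i ≠ j := by
    rw [Function.Injective] at H; push_neg at H
    obtain ⟨i, j, h1, h2⟩ := H; exact ⟨i, j, h1, h2⟩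
  exact Finset.sum_involution (fun σ _ => σ * Equiv.swap i j)
    (fun σ _ => by
      have : (∏ x, A (σ x) (f x)) = ∏ x, A ((σ * Equiv.swap i j) x) (f x) :=
        Fintype.prod_equiv (Equiv.swap i j) _ _
          (by simp [Equiv.apply_swap_eq_self hfij])
      simp [this, Equiv.Perm.sign_swap hij, -Equiv.Perm.sign_swap', prod_mul_distrib])
    (fun σ _ _ => (not_congr Equiv.mul_swap_eq_iff).mpr hij)
    (fun _ _ => mem_univ _) fun σ _ => Equiv.mul_swap_involutive i j σ

private lemma sum_perm_perm {l : ℕ} (C D : Matrix (Fin l) (Fin l) ℂ) :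
    (∑ τ : Equiv.Perm (Fin l), ∑ σ : Equiv.Perm (Fin l),
      ((Equiv.Perm.sign σ : ℤ) : ℂ) * ∏ i, C (σ i) (τ i) * D (τ i) i) = C.det * D.det := by
  rw [← Matrix.det_mul]
  symm
  calc
    det (C * D) = ∑ p : Fin l → Fin l, ∑ σ : Equiv.Perm (Fin l),
        ((Equiv.Perm.sign σ : ℤ) : ℂ) * ∏ i, C (σ i) (p i) * D (p i) i := by
      simp only [det_apply', mul_apply, prod_univ_sum, mul_sum, Fintype.piFinset_univ]
      rw [Finset.sum_comm]
    _ = ∑ p : Fin l → Fin l with Function.Bijective p, ∑ σ : Equiv.Perm (Fin l),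
        ((Equiv.Perm.sign σ : ℤ) : ℂ) * ∏ i, C (σ i) (p i) * D (p i) i := by
      refine (sum_subset (filter_subset _ _) fun f _ hbij ↦ cb_aux ?_).symm
      simp only [mem_filter, mem_univ, true_and] at hbij
      rw [← Finite.injective_iff_bijective] at hbij
      exact hbij
    _ = ∑ τ : Equiv.Perm (Fin l), ∑ σ : Equiv.Perm (Fin l),
        ((Equiv.Perm.sign σ : ℤ) : ℂ) * ∏ i, C (σ i) (τ i) * D (τ i) i :=
      sum_bij (fun p h ↦ Equiv.ofBijective p (mem_filter.1 h).2) (fun _ _ ↦ mem_univ _)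
        (fun _ _ _ _ h ↦ by injection h)
        (fun b _ ↦ ⟨b, mem_filter.2 ⟨mem_univ _, b.bijective⟩, Equiv.coe_fn_injective rfl⟩)
        fun _ _ ↦ rfl

private lemma image_orderEmbOfFin_univ' {m l : ℕ} (s : Finset (Fin m)) (h : s.card = l) :
    Finset.univ.image (s.orderEmbOfFin h) = s := by
  apply Finset.eq_of_subset_of_card_le
  · intro x hx
    simp only [Finset.mem_image] at hx
    obtain ⟨i, _, rfl⟩ := hx
    exact s.orderEmbOfFin_mem h i
  · rw [h, Finset.card_image_of_injective _ (s.orderEmbOfFin h).injective,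
      Finset.card_univ, Fintype.card_fin]

private lemma cauchyBinet {l m : ℕ} (A : Matrix (Fin l) (Fin m) ℂ)
    (B : Matrix (Fin m) (Fin l) ℂ) :
    (A * B).det = ∑ s : {s : Finset (Fin m) // s.card = l},
      (A.submatrix id (s.1.orderEmbOfFin s.2)).det
        * (B.submatrix (s.1.orderEmbOfFin s.2) id).det := by
  calc
    det (A * B) = ∑ f : Fin l → Fin m, ∑ σ : Equiv.Perm (Fin l),
        ((Equiv.Perm.sign σ : ℤ) : ℂ) * ∏ i, A (σ i) (f i) * B (f i) i := by
      simp only [det_apply', mul_apply, prod_univ_sum, mul_sum, Fintype.piFinset_univ]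
      rw [Finset.sum_comm]
    _ = ∑ f : Fin l → Fin m with Function.Injective f, ∑ σ : Equiv.Perm (Fin l),
        ((Equiv.Perm.sign σ : ℤ) : ℂ) * ∏ i, A (σ i) (f i) * B (f i) i := by
      refine (sum_subset (filter_subset _ _) fun f _ hinj ↦ cb_aux ?_).symm
      simpa only [mem_filter, mem_univ, true_and] using hinj
    _ = ∑ p : {s : Finset (Fin m) // s.card = l} × Equiv.Perm (Fin l),
        ∑ σ : Equiv.Perm (Fin l), ((Equiv.Perm.sign σ : ℤ) : ℂ)
          * ∏ i, A (σ i) (p.1.1.orderEmbOfFin p.1.2 (p.2 i))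
            * B (p.1.1.orderEmbOfFin p.1.2 (p.2 i)) i := by
      refine (sum_bij (fun (p : {s : Finset (Fin m) // s.card = l} × Equiv.Perm (Fin l)) _ =>
        (p.1.1.orderEmbOfFin p.1.2) ∘ p.2) ?_ ?_ ?_ ?_).symm
      · intro p _
        simp only [mem_filter, mem_univ, true_and]
        exact (p.1.1.orderEmbOfFin p.1.2).injective.comp p.2.injective
      · rintro ⟨s, σ⟩ _ ⟨t, τ⟩ _ h
        have h' : ⇑(s.1.orderEmbOfFin s.2) ∘ ⇑σ = ⇑(t.1.orderEmbOfFin t.2) ∘ ⇑τ := h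
        have hst : s = t := by
          have := congrArg (fun f => Finset.univ.image f) h'
          simp only [← Finset.image_image, Finset.image_univ_equiv] at this
          rwa [image_orderEmbOfFin_univ', image_orderEmbOfFin_univ',
            ← Subtype.ext_iff] at this
        subst hst
        have hστ : σ = τ :=
          Equiv.coe_fn_injective
            (funext fun i => (s.1.orderEmbOfFin s.2).injective (congrFun h' i))
        rw [hστ]
      · intro f hf
        simp only [mem_filter, mem_univ, true_and] at hf
        set s : Finset (Fin m) := Finset.univ.image f with hs
        have hcard : s.card = l := by
          rw [hs, Finset.card_image_of_injective _ hf, Finset.card_univ, Fintype.card_fin]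
        have hmem : ∀ i, f i ∈ s := fun i => Finset.mem_image_of_mem f (Finset.mem_univ i)
        set g : Fin l → Fin l := fun i => (s.orderIsoOfFin hcard).symm ⟨f i, hmem i⟩ with hg
        have hginj : Function.Injective g := by
          intro a b hab
          apply hf
          have h2 := congrArg (fun z => ((s.orderIsoOfFin hcard) z : Fin m)) hab
          simpa only [hg, OrderIso.apply_symm_apply] using h2
        have hgbij : Function.Bijective g := (Finite.injective_iff_bijective).mp hginj
        refine ⟨⟨⟨s, hcard⟩, Equiv.ofBijective g hgbij⟩, mem_univ _, ?_⟩
        funext i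
        show s.orderEmbOfFin hcard (g i) = f i
        rw [← Finset.coe_orderIsoOfFin_apply]
        simp [hg]
      · intros; rfl
    _ = ∑ s : {s : Finset (Fin m) // s.card = l},
      (A.submatrix id (s.1.orderEmbOfFin s.2)).det
        * (B.submatrix (s.1.orderEmbOfFin s.2) id).det := by
      rw [Fintype.sum_prod_type]
      refine Finset.sum_congr rfl fun s _ => ?_
      exact sum_perm_perm (A.submatrix id (s.1.orderEmbOfFin s.2))
        (B.submatrix (s.1.orderEmbOfFin s.2) id)

end CauchyBinet

/-- The product `Ψ_{n+j-1} ⋯ Ψ_{n+1} Ψ_n` of `j` consecutive companion matrices;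
the empty product (`j = 0`) is the identity matrix. -/
noncomputable def prodPsi {m : ℕ} (Ψ : ℕ → Matrix (Fin m) (Fin m) ℂ) (n : ℕ) :
    ℕ → Matrix (Fin m) (Fin m) ℂ
  | 0 => 1
  | j + 1 => Ψ (n + j) * prodPsi Ψ n j

private lemma psi_step {m : ℕ} (α : ℕ → Fin (m + 1) → ℂ) (N : ℕ)
    (hαm : α N (Fin.last m) ≠ 0)
    (Ψ : ℕ → Matrix (Fin m) (Fin m) ℂ)
    (hΨ : ∀ (i j : Fin m), Ψ N i j =
      if (i : ℕ) + 1 = m then - α N (Fin.castSucc j) / α N (Fin.last m)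
      else if (j : ℕ) = (i : ℕ) + 1 then 1 else 0)
    (u : ℕ → ℂ) (hu : ∑ j : Fin (m + 1), α N j * u (N + (j : ℕ)) = 0) :
    Ψ N *ᵥ (fun i : Fin m => u (N + (i : ℕ))) = fun i : Fin m => u (N + 1 + (i : ℕ)) := by
  funext i
  show ∑ j, Ψ N i j * u (N + (j : ℕ)) = u (N + 1 + (i : ℕ))
  by_cases hi : (i : ℕ) + 1 = m
  · have key : ∑ j : Fin m, α N (Fin.castSucc j) * u (N + (j : ℕ))
        + α N (Fin.last m) * u (N + m) = 0 := by
      rw [Fin.sum_univ_castSucc] at hu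
      simpa [Fin.val_last] using hu
    have hNi : N + 1 + (i : ℕ) = N + m := by omega
    rw [hNi]
    have h1 : ∑ j, Ψ N i j * u (N + (j : ℕ))
        = (∑ j : Fin m, α N (Fin.castSucc j) * u (N + (j : ℕ))) * (-1 / α N (Fin.last m)) := by
      rw [Finset.sum_mul]
      refine Finset.sum_congr rfl fun j _ => ?_
      rw [hΨ i j, if_pos hi]
      ring
    rw [h1]
    have h2 : ∑ j : Fin m, α N (Fin.castSucc j) * u (N + (j : ℕ))
        = - (α N (Fin.last m) * u (N + m)) := by linear_combination key
    rw [h2]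
    field_simp
  · have hlt : (i : ℕ) + 1 < m := lt_of_le_of_ne i.isLt hi
    have h1 : ∑ j, Ψ N i j * u (N + (j : ℕ))
        = ∑ j : Fin m, (if j = (⟨(i : ℕ) + 1, hlt⟩ : Fin m) then (1 : ℂ) else 0)
            * u (N + (j : ℕ)) := by
      refine Finset.sum_congr rfl fun j _ => ?_
      rw [hΨ i j, if_neg hi]
      congr 1
      simp [Fin.ext_iff]
    rw [h1]
    simp only [ite_mul, one_mul, zero_mul, Finset.sum_ite_eq' Finset.univ,
      Finset.mem_univ, if_true]
    simp [show N + ((i : ℕ) + 1) = N + 1 + (i : ℕ) by omega]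

private lemma prod_psi_step {m : ℕ} (α : ℕ → Fin (m + 1) → ℂ)
    (hαm : ∀ N, α N (Fin.last m) ≠ 0)
    (Ψ : ℕ → Matrix (Fin m) (Fin m) ℂ)
    (hΨ : ∀ N (i j : Fin m), Ψ N i j =
      if (i : ℕ) + 1 = m then - α N (Fin.castSucc j) / α N (Fin.last m)
      else if (j : ℕ) = (i : ℕ) + 1 then 1 else 0)
    (u : ℕ → ℂ) (hu : ∀ N, ∑ j : Fin (m + 1), α N j * u (N + (j : ℕ)) = 0) (n : ℕ) :
    ∀ k : ℕ, prodPsi Ψ n k *ᵥ (fun i : Fin m => u (n + (i : ℕ)))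
      = fun i : Fin m => u (n + k + (i : ℕ)) := by
  intro k
  induction k with
  | zero => simp [prodPsi]
  | succ k ih =>
    show (Ψ (n + k) * prodPsi Ψ n k) *ᵥ _ = _
    rw [← Matrix.mulVec_mulVec, ih,
      psi_step α (n + k) (hαm (n + k)) Ψ (hΨ (n + k)) u (hu (n + k))]
    funext i
    congr 1

/-- **The difference equation for the minors** (equation (3.3) of the paper).
If `x 0, …, x (m-1)` are solutions of the recurrence
`α_n^{(m)} x_{n+m} + ⋯ + α_n^{(0)} x_n = 0` with companion matrices `Ψ n`, then for
fixed strictly increasing multi-indices `μs` (rows) and `υs` (columns of solutions),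
the sequence `y n = det [x (υs b) (n + μs a)]` satisfies the linear recurrence of
order `C(m,l)` whose coefficients are the indicated determinants of `l × l` minors of
the products `Ψ_{n+j-1} ⋯ Ψ_n`; the coefficients do not depend on `υs`
(the multi-indices `ν` being enumerated by an arbitrary fixed ordering `e`). -/
theorem stmt_6 (m l : ℕ) (hm : 1 ≤ m) (hl : 1 ≤ l) (hlm : l ≤ m)
    (α : ℕ → Fin (m + 1) → ℂ)
    (hα : ∀ n, α n 0 * α n (Fin.last m) ≠ 0)
    (Ψ : ℕ → Matrix (Fin m) (Fin m) ℂ)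
    (hΨ : ∀ n (i j : Fin m), Ψ n i j =
      if (i : ℕ) + 1 = m then - α n (Fin.castSucc j) / α n (Fin.last m)
      else if (j : ℕ) = (i : ℕ) + 1 then 1 else 0)
    (x : Fin m → ℕ → ℂ)
    (hx : ∀ (i : Fin m) (n : ℕ), ∑ j : Fin (m + 1), α n j * x i (n + (j : ℕ)) = 0)
    (μs : Fin l → Fin m) (hμ : StrictMono μs)
    (υs : Fin l → Fin m) (hυ : StrictMono υs)
    (e : Fin (Nat.choose m l) ≃ {s : Finset (Fin m) // s.card = l}) :
    ∀ n : ℕ,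
      ∑ k : Fin (Nat.choose m l + 1),
        (-1 : ℂ) ^ (k : ℕ) *
          (Matrix.of fun (j ν : Fin (Nat.choose m l)) =>
            (Matrix.of fun (a b : Fin l) =>
              prodPsi Ψ n ((k.succAbove j : Fin (Nat.choose m l + 1)) : ℕ)
                (μs a) ((e ν).1.orderEmbOfFin (e ν).2 b)).det).det *
          (Matrix.of fun (a b : Fin l) =>
            x (υs b) (n + (k : ℕ) + (μs a : ℕ))).det = 0 := by
  intro n
  have hαm : ∀ N, α N (Fin.last m) ≠ 0 := fun N h => hα N (by rw [h, mul_zero])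
  set X : Matrix (Fin m) (Fin l) ℂ := Matrix.of fun i b => x (υs b) (n + (i : ℕ)) with hX
  set Dm : ℕ → Fin (Nat.choose m l) → ℂ := fun k ν =>
    (Matrix.of fun a b : Fin l =>
      prodPsi Ψ n k (μs a) ((e ν).1.orderEmbOfFin (e ν).2 b)).det with hDm
  set c : Fin (Nat.choose m l) → ℂ := fun ν =>
    (X.submatrix ((e ν).1.orderEmbOfFin (e ν).2) id).det with hc
  have hy : ∀ k : ℕ, (Matrix.of fun a b : Fin l => x (υs b) (n + k + (μs a : ℕ))).det
      = ∑ ν, Dm k ν * c ν := by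
    intro k
    have hAX : (Matrix.of fun a b : Fin l => x (υs b) (n + k + (μs a : ℕ)))
        = (prodPsi Ψ n k).submatrix μs id * X := by
      ext a b
      have h := congrFun (prod_psi_step α hαm Ψ hΨ (x (υs b)) (hx (υs b)) n k) (μs a)
      simp only [Matrix.mulVec, dotProduct] at h
      simp only [Matrix.mul_apply, Matrix.submatrix_apply, id_eq, Matrix.of_apply, hX]
      exact h.symm
    rw [hAX, cauchyBinet, ← Equiv.sum_comp e]
    rfl
  set B : Matrix (Fin ((Nat.choose m l) + 1)) (Fin ((Nat.choose m l) + 1)) ℂ :=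
    Matrix.of fun k => Fin.cons
      ((Matrix.of fun a b : Fin l => x (υs b) (n + (k : ℕ) + (μs a : ℕ))).det)
      (fun ν => Dm (k : ℕ) ν) with hB
  have hB0 : B.det = 0 := by
    rw [← Matrix.exists_mulVec_eq_zero_iff]
    refine ⟨Fin.cons 1 (fun ν => - c ν), fun h => one_ne_zero (congrFun h 0), ?_⟩
    funext k
    show ∑ j, B k j * (Fin.cons 1 (fun ν => - c ν) : Fin ((Nat.choose m l) + 1) → ℂ) j = 0
    rw [Fin.sum_univ_succ]
    simp only [Fin.cons_zero, Fin.cons_succ, hB, Matrix.of_apply, mul_one, mul_neg]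
    rw [hy (k : ℕ)]
    simp
  rw [← hB0, Matrix.det_succ_column_zero]
  refine Finset.sum_congr rfl fun k _ => ?_
  have h1 : B k 0 = (Matrix.of fun a b : Fin l =>
      x (υs b) (n + (k : ℕ) + (μs a : ℕ))).det := rfl
  have h2 : B.submatrix k.succAbove Fin.succ
      = Matrix.of fun (j ν : Fin (Nat.choose m l)) =>
        (Matrix.of fun (a b : Fin l) =>
          prodPsi Ψ n ((k.succAbove j : Fin ((Nat.choose m l) + 1)) : ℕ)
            (μs a) ((e ν).1.orderEmbOfFin (e ν).2 b)).det := by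
    ext j ν
    simp [hB, Fin.cons_succ, hDm]
  rw [h1, h2]
  ring
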